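/- Let G be a minimum counterexample to the statement 'every odd-hole-free graph H with Δ(H) ≥ 7 satisfies χ(H) ≤ max{Δ(H) − 1, ω(H)}', and let u be a vertex of G with degree Δ(G). Then there exist two nonadjacent vertices x, y ∈ N(u) such that every proper coloring of G − u with Δ(G) − 1 colors assigns the same color to x and y and assigns pairwise distinct colors to the vertices of N(u) \ {y}; that is, the unique monochromatic pair of neighbors of u is the same pair {x, y} in every proper (Δ(G) − 1)-coloring of G − u. -/

import Mathlib

/-!
Put `m = Δ - 1`, so `deg u = m + 1` and `G` is not `m`-colourable. In a proper `m`-colouring `c`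
of `G - u` every colour occurs on `N(u)`, since otherwise `u` could be coloured; by counting,
exactly one pair `{x, y}` of neighbours of `u` is monochromatic. For any other neighbour `v` and
colour `β ≠ c v`, the `(c v, β)`-Kempe chain of `v` in `G - u` must reach a `β`-coloured
neighbour of `u` (otherwise swapping it frees `c v` at `u`), and a shortest such connection
closes with `u` into an odd hole unless it is a single edge. Hence `N(u) \ {x, y}` is a clique
whose vertices all see `x` or `y`. If another colouring had a different pair, these facts for
both colourings produce either an edge inside a monochromatic pair or a clique `{u} ∪ N(u) \ {x}`
of size `m + 1`; but `G` is then `(m + 1)`-colourable and `ω < χ`. When `G - u` has no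
`m`-colouring, a nonadjacent pair in `N(u)` exists because greedy colouring gives `ω < χ ≤ Δ + 1`.
-/

/-- `G` has an *odd hole*: an induced cycle of odd length at least 5
(a hole is an induced cycle of length at least 4, so odd holes have length at least 5). -/
def SimpleGraph.HasOddHole {V : Type*} (G : SimpleGraph V) : Prop :=
  ∃ n : ℕ, Odd n ∧ 5 ≤ n ∧ Nonempty (SimpleGraph.cycleGraph n ↪g G)

open Finset SimpleGraph

namespace SimpleGraph

variable {V α : Type*} (G : SimpleGraph V)

/-- A proper colouring of `G - u` is encoded as `c : V → α` with `G.IsProperOn c {u}ᶜ`. -/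
def IsProperOn (c : V → α) (s : Set V) : Prop :=
  ∀ ⦃v w⦄, v ∈ s → w ∈ s → G.Adj v w → c v ≠ c w

variable {G}

theorem IsProperOn.update_insert [DecidableEq V] {c : V → α} {s : Set V} (hc : G.IsProperOn c s)
    {v : V} {k : α} (hk : ∀ w ∈ s, G.Adj v w → c w ≠ k) :
    G.IsProperOn (Function.update c v k) (insert v s) := by
  intro x y hx hy hxy
  rcases eq_or_ne x v with rfl | hxv
  · rw [Function.update_self, Function.update_of_ne (G.ne_of_adj hxy).symm]
    exact (hk y (hy.resolve_left (G.ne_of_adj hxy).symm) hxy).symm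
  rcases eq_or_ne y v with rfl | hyv
  · rw [Function.update_self, Function.update_of_ne hxv]
    exact hk x (hx.resolve_left hxv) hxy.symm
  rw [Function.update_of_ne hxv, Function.update_of_ne hyv]
  exact hc (hx.resolve_left hxv) (hy.resolve_left hyv) hxy

theorem IsProperOn.colorable {m : ℕ} {c : V → Fin m} (hc : G.IsProperOn c Set.univ) :
    G.Colorable m :=
  ⟨Coloring.mk c fun h => hc trivial trivial h⟩

theorem colorable_of_forall_degree_le [Fintype V] [DecidableRel G.Adj] {d : ℕ}
    (h : ∀ v, G.degree v ≤ d) : G.Colorable (d + 1) := by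
  classical
  suffices ∀ s : Finset V, ∃ c : V → Fin (d + 1), G.IsProperOn c s by
    obtain ⟨c, hc⟩ := this univ
    exact IsProperOn.colorable (by simpa using hc)
  intro s
  induction s using Finset.induction_on with
  | empty => exact ⟨fun _ => 0, by simp [IsProperOn]⟩
  | insert v s _ ih =>
    obtain ⟨c, hc⟩ := ih
    have hfew : #((G.neighborFinset v ∩ s).image c) < #(univ : Finset (Fin (d + 1))) :=
      calc #((G.neighborFinset v ∩ s).image c) ≤ #(G.neighborFinset v) :=
            card_image_le.trans (card_le_card inter_subset_left)
        _ < #(univ : Finset (Fin (d + 1))) := by simpa using Nat.lt_succ_of_le (h v)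
    obtain ⟨k, -, hk⟩ := exists_mem_notMem_of_card_lt_card hfew
    refine ⟨Function.update c v k, ?_⟩
    rw [coe_insert]
    refine hc.update_insert fun w hw hvw hcw => hk ?_
    exact mem_image.2 ⟨w, mem_inter.2 ⟨(mem_neighborFinset ..).2 hvw, hw⟩, hcw⟩

theorem IsProperOn.colorable_of_compl_singleton {m : ℕ} {c : V → Fin m} {u : V}
    (hc : G.IsProperOn c {u}ᶜ) {k : Fin m} (hk : ∀ w, G.Adj u w → c w ≠ k) : G.Colorable m := by
  classical
  have hall : ∀ x, x ∈ insert u ({u}ᶜ : Set V) := fun x => by simp [em]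
  have := hc.update_insert fun w _ huw => hk w huw
  exact IsProperOn.colorable fun x y _ _ hxy => this (hall x) (hall y) hxy

theorem IsProperOn.colorable_succ_of_compl_singleton {m : ℕ} {c : V → Fin m} {u : V}
    (hc : G.IsProperOn c {u}ᶜ) : G.Colorable (m + 1) :=
  IsProperOn.colorable_of_compl_singleton (c := Fin.castSucc ∘ c) (k := Fin.last m)
    (fun _ _ hv hw hvw h => hc hv hw hvw (Fin.castSucc_injective _ h))
    fun _ _ => (Fin.castSucc_lt_last _).ne

theorem IsClique.card_lt_of_colorable [Finite V]
    (hω : (G.cliqueNum : ℕ∞) < G.chromaticNumber) {k : ℕ} (hk : G.Colorable k) {T : Finset V}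
    (hT : G.IsClique (T : Set V)) : #T < k := by
  have := (Nat.cast_le.2 (hT.card_le_cliqueNum)).trans_lt (hω.trans_le hk.chromaticNumber_le)
  exact_mod_cast this

theorem exists_ne_not_adj_of_forall_isClique_card_le [Fintype V] [DecidableRel G.Adj] (u : V)
    (h : ∀ T : Finset V, G.IsClique (T : Set V) → #T ≤ G.degree u) :
    ∃ x y, x ≠ y ∧ G.Adj u x ∧ G.Adj u y ∧ ¬ G.Adj x y := by
  classical
  by_contra! hN
  have hT : G.IsClique (insert u (G.neighborFinset u) : Finset V) := by
    rw [coe_insert, isClique_insert, coe_neighborFinset]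
    exact ⟨fun x hx y hy hxy => hN x y hxy hx hy, fun w hw _ => hw⟩
  have := h _ hT
  rw [card_insert_of_notMem (G.notMem_neighborFinset_self u), card_neighborFinset_eq_degree] at this
  omega

theorem cycleGraph_adj_of_lt {n : ℕ} {i j : Fin n} (h : i < j) :
    (cycleGraph n).Adj i j ↔ (j : ℕ) = i + 1 ∨ ((i : ℕ) = 0 ∧ (j : ℕ) + 1 = n) := by
  rw [cycleGraph_adj', Fin.coe_sub_iff_lt.2 h, Fin.coe_sub_iff_le.2 h.le]
  have := j.isLt
  have : (i : ℕ) < j := h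
  omega

theorem hasOddHole_of_path_of_apex {ℓ : ℕ} (hodd : Odd ℓ) (hℓ : 3 ≤ ℓ) (p : ℕ → V) (u : V)
    (hinj : Set.InjOn p {i | i ≤ ℓ})
    (hadj : ∀ i j, i < j → j ≤ ℓ → (G.Adj (p i) (p j) ↔ j = i + 1))
    (hapex : ∀ i ≤ ℓ, G.Adj u (p i) ↔ i = 0 ∨ i = ℓ) : G.HasOddHole := by
  have hpu : ∀ i ≤ ℓ, p i ≠ u := by
    intro i hi hpi
    have hend : ¬ (i = 0 ∨ i = ℓ) := fun h => G.irrefl (hpi ▸ (hapex i hi).2 h)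
    have h1 : i = 1 := (hadj 0 i (by omega) hi).1 (hpi ▸ ((hapex 0 (by omega)).2 (.inl rfl)).symm)
    have h2 : ℓ = 1 + 1 := (hadj 1 ℓ (by omega) le_rfl).1 (h1 ▸ hpi ▸ (hapex ℓ le_rfl).2 (.inr rfl))
    omega
  let f : Fin (ℓ + 2) → V := fun i => if (i : ℕ) ≤ ℓ then p i else u
  have hf_inj : Function.Injective f := by
    intro i j h
    simp only [f] at h
    split_ifs at h with hi hj hj
    · exact Fin.ext (hinj hi hj h)
    · exact absurd h (hpu i hi)
    · exact absurd h.symm (hpu j hj)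
    · exact Fin.ext (by omega)
  have hf_adj : ∀ i j : Fin (ℓ + 2), i < j →
      (G.Adj (f i) (f j) ↔ (cycleGraph (ℓ + 2)).Adj i j) := by
    intro i j hij
    rw [cycleGraph_adj_of_lt hij]
    have hij' : (i : ℕ) < j := hij
    have := j.isLt
    simp only [f, if_pos (show (i : ℕ) ≤ ℓ by omega)]
    split_ifs with hj
    · rw [hadj _ _ hij' hj]
      omega
    · rw [G.adj_comm, hapex _ (by omega)]
      omega
  refine ⟨ℓ + 2, hodd.add_even even_two, by omega, ⟨⟨⟨f, hf_inj⟩, fun {i j} => ?_⟩⟩⟩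
  rcases lt_trichotomy i j with h | rfl | h
  · exact hf_adj i j h
  · simp
  · rw [G.adj_comm, (cycleGraph _).adj_comm]
    exact hf_adj j i h

theorem Walk.not_adj_getVert_of_length_eq_dist {a b : V} (P : G.Walk a b)
    (hP : P.length = G.dist a b) {i j : ℕ} (hij : i + 2 ≤ j) (hj : j ≤ P.length) :
    ¬ G.Adj (P.getVert i) (P.getVert j) := fun h => by
  have := G.dist_le ((P.take i).append (.cons h (P.drop j)))
  simp only [Walk.length_append, Walk.length_cons, Walk.take_length, Walk.drop_length] at this
  omega

variable (G) in
def kempeGraph (u : V) (c : V → α) (a b : α) : SimpleGraph V where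
  Adj x y := G.Adj x y ∧ x ≠ u ∧ y ≠ u ∧ (c x = a ∧ c y = b ∨ c x = b ∧ c y = a)
  symm := ⟨fun _ _ h => ⟨h.1.symm, h.2.2.1, h.2.1, h.2.2.2.symm.imp And.symm And.symm⟩⟩
  loopless := ⟨fun _ h => G.irrefl h.1⟩

namespace kempeGraph

variable {u v w : V} {c : V → α} {a b : α}

theorem color_getVert (P : (G.kempeGraph u c a b).Walk v w) (hv : c v = a) {k : ℕ}
    (hk : k ≤ P.length) : c (P.getVert k) = if Even k then a else b := by
  induction k with
  | zero => simpa using hv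
  | succ k ih =>
    have hstep := (P.adj_getVert_succ (by omega : k < P.length)).2.2.2
    rw [ih (by omega)] at hstep
    by_cases hk : Even k <;> grind [Nat.even_add_one]

theorem color_of_reachable (h : (G.kempeGraph u c a b).Reachable v w) (hv : c v = a) :
    c w = a ∨ c w = b := by
  obtain ⟨P⟩ := h
  have := color_getVert P hv le_rfl
  rw [P.getVert_length] at this
  split_ifs at this <;> simp [this]

end kempeGraph

variable (G) in
open Classical in
noncomputable def kempeSwap [DecidableEq α] (u : V) (c : V → α) (a b : α) (v : V) : V → α :=
  fun w => if (G.kempeGraph u c a b).Reachable v w then Equiv.swap a b (c w) else c w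

theorem IsProperOn.kempeSwap [DecidableEq α] {u v : V} {c : V → α} (hc : G.IsProperOn c {u}ᶜ)
    {a b : α} (hv : c v = a) : G.IsProperOn (G.kempeSwap u c a b v) {u}ᶜ := by
  classical
  have hcross : ∀ ⦃x y⦄, x ≠ u → y ≠ u → G.Adj x y → (G.kempeGraph u c a b).Reachable v x →
      ¬ (G.kempeGraph u c a b).Reachable v y →
      G.kempeSwap u c a b v x ≠ G.kempeSwap u c a b v y := by
    intro x y hx hy hxy hrx hry
    have hcx := kempeGraph.color_of_reachable hrx hv
    have hcy : c y ≠ a ∧ c y ≠ b := by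
      have hne := hc hx hy hxy
      constructor <;> intro h <;>
        exact hry (hrx.trans (Adj.reachable ⟨hxy, hx, hy, by grind⟩))
    simp only [SimpleGraph.kempeSwap, if_pos hrx, if_neg hry,
      Equiv.swap_apply_of_ne_of_ne hcy.1 hcy.2]
    rcases hcx with h | h <;> simp [h, hcy.1.symm, hcy.2.symm]
  intro x y hx hy hxy
  by_cases hrx : (G.kempeGraph u c a b).Reachable v x <;>
    by_cases hry : (G.kempeGraph u c a b).Reachable v y
  · simp only [SimpleGraph.kempeSwap, if_pos hrx, if_pos hry]
    exact (Equiv.swap a b).injective.ne (hc hx hy hxy)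
  · exact hcross hx hy hxy hrx hry
  · exact (hcross hy hx hxy.symm hry hrx).symm
  · simp only [SimpleGraph.kempeSwap, if_neg hrx, if_neg hry]
    exact hc hx hy hxy

theorem kempeGraph.length_eq_one_or_hasOddHole {u v b : V} {c : V → α} {β : α}
    (hc : G.IsProperOn c {u}ᶜ) (hv : G.Adj u v) (huniq : ∀ w, G.Adj u w → c w = c v → w = v)
    (hb : G.Adj u b) (hbβ : c b = β) (hβ : β ≠ c v) (P : (G.kempeGraph u c (c v) β).Walk v b)
    (hP : ∀ b', G.Adj u b' → c b' = β →
      ∀ Q : (G.kempeGraph u c (c v) β).Walk v b', P.length ≤ Q.length) :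
    P.length = 1 ∨ G.HasOddHole := by
  have hcol : ∀ k ≤ P.length, c (P.getVert k) = if Even k then c v else β :=
    fun k hk => color_getVert P rfl hk
  have hodd : Odd P.length := by
    by_contra h
    have := hcol _ le_rfl
    rw [P.getVert_length, if_pos (Nat.not_odd_iff_even.1 h)] at this
    exact hβ (hbβ ▸ this)
  have hdist : P.length = (G.kempeGraph u c (c v) β).dist v b := by
    obtain ⟨Q, hQ⟩ := P.reachable.exists_walk_length_eq_dist
    exact le_antisymm (hQ ▸ hP b hb hbβ Q) (dist_le P)
  have hinj := (P.isPath_of_length_eq_dist hdist).getVert_injOn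
  have hpu : ∀ k ≤ P.length, P.getVert k ≠ u := by
    intro k hk
    rcases hk.lt_or_eq with hk | rfl
    · exact (P.adj_getVert_succ hk).2.1
    · rw [P.getVert_length]
      exact (G.ne_of_adj hb).symm
  have hℓ : P.length = 1 ∨ 3 ≤ P.length := by
    obtain ⟨k, hk⟩ := hodd
    omega
  refine hℓ.imp_right fun hℓ => G.hasOddHole_of_path_of_apex hodd hℓ P.getVert u hinj ?_ ?_
  · intro i j hij hj
    refine ⟨fun hadj => by_contra fun hne => ?_, ?_⟩
    · -- a chord joins two vertices of equal colour, or is a Kempe edge shortening `P`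
      by_cases hpar : Even i ↔ Even j
      · refine hc (hpu i (by omega)) (hpu j hj) hadj ?_
        rw [hcol i (by omega), hcol j hj]
        simp [hpar]
      · refine P.not_adj_getVert_of_length_eq_dist hdist (by omega) hj
          ⟨hadj, hpu i (by omega), hpu j hj, ?_⟩
        rw [hcol i (by omega), hcol j hj]
        by_cases hi : Even i <;> simp_all
    · rintro rfl
      exact (P.adj_getVert_succ (by omega)).1
  · intro k hk
    refine ⟨fun hadj => ?_, ?_⟩
    · by_cases hk' : Even k
      · have := huniq _ hadj (by rw [hcol k hk, if_pos hk'])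
        exact .inl (hinj hk (Nat.zero_le _) (this.trans P.getVert_zero.symm))
      · have := hP _ hadj (by rw [hcol k hk, if_neg hk']) (P.take k)
        simp only [Walk.take_length] at this
        omega
    · rintro (rfl | rfl)
      · simpa using hv
      · simpa using hb

theorem exists_adj_of_unique_color {m : ℕ} (hfree : ¬ G.HasOddHole) (hnc : ¬ G.Colorable m)
    {u v : V} {c : V → Fin m} (hc : G.IsProperOn c {u}ᶜ) (hv : G.Adj u v)
    (huniq : ∀ w, G.Adj u w → c w = c v → w = v) {β : Fin m} (hβ : β ≠ c v) :
    ∃ s, G.Adj u s ∧ c s = β ∧ G.Adj v s := by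
  classical
  set H := G.kempeGraph u c (c v) β
  have hex : ∃ ℓ b, G.Adj u b ∧ c b = β ∧ ∃ P : H.Walk v b, P.length = ℓ := by
    -- otherwise swapping the Kempe chain of `v` frees the colour `c v` on `N(u)`
    by_contra! hno
    refine hnc ((hc.kempeSwap (b := β) (v := v) rfl).colorable_of_compl_singleton
      (k := c v) fun w hw hcw => ?_)
    by_cases hr : H.Reachable v w
    · obtain ⟨P⟩ := hr
      rcases kempeGraph.color_of_reachable ⟨P⟩ rfl with h | h
      · obtain rfl := huniq w hw h
        rw [kempeSwap, if_pos (Reachable.refl _), Equiv.swap_apply_left] at hcw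
        exact hβ hcw
      · exact hno _ w hw h P rfl
    · rw [kempeSwap, if_neg hr] at hcw
      exact hr (huniq w hw hcw ▸ Reachable.refl _)
  obtain ⟨b, hb, hbβ, P, hP⟩ := Nat.find_spec hex
  have hmin : ∀ b', G.Adj u b' → c b' = β → ∀ Q : H.Walk v b', P.length ≤ Q.length :=
    fun b' hb' hb'β Q => hP ▸ Nat.find_min' hex ⟨b', hb', hb'β, Q, rfl⟩
  rcases kempeGraph.length_eq_one_or_hasOddHole hc hv huniq hb hbβ hβ P hmin with h | h
  · exact ⟨b, hb, hbβ, (Walk.adj_of_length_eq_one h).1⟩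
  · exact absurd h hfree

variable (G) in
structure IsUniqueMonochromaticPair (u : V) (c : V → α) (x y : V) : Prop where
  ne : x ≠ y
  adj_left : G.Adj u x
  adj_right : G.Adj u y
  color_eq : c x = c y
  injOn : Set.InjOn c (G.neighborSet u \ {y})

theorem exists_isUniqueMonochromaticPair [Fintype V] [DecidableRel G.Adj] {m : ℕ} {u : V}
    (hdeg : G.degree u = m + 1) (hnc : ¬ G.Colorable m) {c : V → Fin m}
    (hc : G.IsProperOn c {u}ᶜ) : ∃ x y, G.IsUniqueMonochromaticPair u c x y := by
  classical
  have hsurj : ∀ k, ∃ w, G.Adj u w ∧ c w = k := by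
    intro k
    by_contra! hk
    exact hnc (hc.colorable_of_compl_singleton hk)
  obtain ⟨x, hx, y, hy, hxy, hcxy⟩ := exists_ne_map_eq_of_card_lt_of_maps_to
    (t := univ) (by simp [hdeg]) fun _ (_ : _ ∈ G.neighborFinset u) => mem_univ (c _)
  rw [mem_neighborFinset] at hx hy
  refine ⟨x, y, hxy, hx, hy, hcxy, ?_⟩
  have hsurjOn : Set.SurjOn c ((G.neighborFinset u).erase y) (univ : Finset (Fin m)) := by
    intro k _
    obtain ⟨w, hw, rfl⟩ := hsurj k
    by_cases hwy : w = y
    · exact ⟨x, by simp [hx, hxy], hwy ▸ hcxy⟩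
    · exact ⟨w, by simp [hw, hwy], rfl⟩
  simpa using injOn_of_surjOn_of_card_le c (fun _ _ => mem_univ _) hsurjOn
    (by simp [card_erase_of_mem, hy, hdeg])

namespace IsUniqueMonochromaticPair

variable {u x y : V} {c : V → α}

theorem symm (h : G.IsUniqueMonochromaticPair u c x y) : G.IsUniqueMonochromaticPair u c y x where
  ne := h.ne.symm
  adj_left := h.adj_right
  adj_right := h.adj_left
  color_eq := h.color_eq.symm
  injOn := by
    have key : ∀ z ∈ G.neighborSet u, z ≠ x → c z = c y → z = y := fun z hz hzx hzc =>
      by_contra fun hzy => hzx (h.injOn ⟨hz, hzy⟩ ⟨h.adj_left, h.ne⟩ (hzc.trans h.color_eq.symm))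
    rintro v ⟨hv, hvx⟩ w ⟨hw, hwx⟩ hvw
    by_cases hvy : v = y <;> by_cases hwy : w = y
    · rw [hvy, hwy]
    · rw [hvy, key w hw hwx (hvy ▸ hvw).symm]
    · rw [hwy, key v hv hvx (hwy ▸ hvw)]
    · exact h.injOn ⟨hv, hvy⟩ ⟨hw, hwy⟩ hvw

theorem not_adj (h : G.IsUniqueMonochromaticPair u c x y) (hc : G.IsProperOn c {u}ᶜ) :
    ¬ G.Adj x y := fun hxy =>
  hc (G.ne_of_adj h.adj_left).symm (G.ne_of_adj h.adj_right).symm hxy h.color_eq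

theorem eq_of_color_eq (h : G.IsUniqueMonochromaticPair u c x y) {v w : V} (hv : G.Adj u v)
    (hvx : v ≠ x) (hvy : v ≠ y) (hw : G.Adj u w) (hcw : c w = c v) : w = v := by
  have hwy : w ≠ y := by
    rintro rfl
    exact hvx (h.injOn ⟨hv, hvy⟩ ⟨h.adj_left, h.ne⟩ (hcw.symm.trans h.color_eq.symm))
  exact h.injOn ⟨hw, hwy⟩ ⟨hv, hvy⟩ hcw

theorem adj_of_ne {m : ℕ} {c : V → Fin m} (hfree : ¬ G.HasOddHole) (hnc : ¬ G.Colorable m)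
    (hc : G.IsProperOn c {u}ᶜ) (h : G.IsUniqueMonochromaticPair u c x y) {v w : V}
    (hv : G.Adj u v) (hvx : v ≠ x) (hvy : v ≠ y) (hw : G.Adj u w) (hwx : w ≠ x) (hwy : w ≠ y)
    (hvw : v ≠ w) : G.Adj v w := by
  obtain ⟨s, hs, hcs, hvs⟩ := exists_adj_of_unique_color hfree hnc hc hv
    (fun _ => h.eq_of_color_eq hv hvx hvy) (β := c w)
    fun hcw => hvw (h.eq_of_color_eq hv hvx hvy hw hcw).symm
  rwa [h.eq_of_color_eq hw hwx hwy hs hcs] at hvs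

theorem adj_or_adj {m : ℕ} {c : V → Fin m} (hfree : ¬ G.HasOddHole) (hnc : ¬ G.Colorable m)
    (hc : G.IsProperOn c {u}ᶜ) (h : G.IsUniqueMonochromaticPair u c x y) {v : V}
    (hv : G.Adj u v) (hvx : v ≠ x) (hvy : v ≠ y) : G.Adj v x ∨ G.Adj v y := by
  obtain ⟨s, hs, hcs, hvs⟩ := exists_adj_of_unique_color hfree hnc hc hv
    (fun _ => h.eq_of_color_eq hv hvx hvy) (β := c x)
    fun hcx => hvx (h.eq_of_color_eq hv hvx hvy h.adj_left hcx).symm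
  by_cases hsy : s = y
  · exact .inr (hsy ▸ hvs)
  · exact .inl (h.injOn ⟨hs, hsy⟩ ⟨h.adj_left, h.ne⟩ hcs ▸ hvs)

section Fintype

variable [Fintype V] [DecidableRel G.Adj] {m : ℕ} {c₀ c : V → Fin m}

theorem right_eq_of_left_eq (hfree : ¬ G.HasOddHole) (hnc : ¬ G.Colorable m)
    (hdeg : G.degree u = m + 1) (hclique : ∀ T : Finset V, G.IsClique (T : Set V) → #T ≤ m)
    (hc₀ : G.IsProperOn c₀ {u}ᶜ) (hc : G.IsProperOn c {u}ᶜ) {a b q : V}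
    (h₀ : G.IsUniqueMonochromaticPair u c₀ a b) (h : G.IsUniqueMonochromaticPair u c a q) :
    q = b := by
  classical
  by_contra hqb
  have hqb_adj : G.Adj q b := (h₀.adj_or_adj hfree hnc hc₀ h.adj_right h.ne.symm hqb).resolve_left
    fun hqa => h.not_adj hc hqa.symm
  have hb_adj : ∀ t, G.Adj u t → t ≠ a → t ≠ b → G.Adj b t := fun t ht hta htb => by
    by_cases htq : t = q
    · exact htq ▸ hqb_adj.symm
    · exact h.adj_of_ne hfree hnc hc h₀.adj_right h₀.ne.symm (Ne.symm hqb) ht hta htq (Ne.symm htb)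
  have hT : G.IsClique (insert u ((G.neighborFinset u).erase a) : Finset V) := by
    rw [coe_insert, isClique_insert, coe_erase, coe_neighborFinset]
    refine ⟨?_, fun w hw _ => hw.1⟩
    rintro s ⟨hs, hsa⟩ t ⟨ht, hta⟩ hst
    by_cases hsb : s = b
    · exact hsb ▸ hb_adj t ht hta (hsb ▸ Ne.symm hst)
    by_cases htb : t = b
    · exact htb ▸ (hb_adj s hs hsa (htb ▸ hst)).symm
    exact h₀.adj_of_ne hfree hnc hc₀ hs hsa hsb ht hta htb hst
  have := hclique _ hT
  rw [card_insert_of_notMem (by simp), card_erase_of_mem (by simpa using h₀.adj_left),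
    card_neighborFinset_eq_degree, hdeg] at this
  omega

theorem of_isProperOn (hfree : ¬ G.HasOddHole) (hnc : ¬ G.Colorable m)
    (hdeg : G.degree u = m + 1) (hclique : ∀ T : Finset V, G.IsClique (T : Set V) → #T ≤ m)
    (hc₀ : G.IsProperOn c₀ {u}ᶜ) (h₀ : G.IsUniqueMonochromaticPair u c₀ x y)
    (hc : G.IsProperOn c {u}ᶜ) : G.IsUniqueMonochromaticPair u c x y := by
  obtain ⟨p, q, h⟩ := exists_isUniqueMonochromaticPair hdeg hnc hc
  have key : ∀ {a b q}, G.IsUniqueMonochromaticPair u c₀ a b →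
      G.IsUniqueMonochromaticPair u c a q → q = b :=
    right_eq_of_left_eq hfree hnc hdeg hclique hc₀ hc
  by_cases hpx : p = x
  · subst hpx
    exact key h₀ h ▸ h
  by_cases hpy : p = y
  · subst hpy
    exact (key h₀.symm h ▸ h).symm
  by_cases hqx : q = x
  · subst hqx
    exact key h₀ h.symm ▸ h.symm
  by_cases hqy : q = y
  · subst hqy
    exact (key h₀.symm h.symm ▸ h.symm).symm
  exact absurd (h₀.adj_of_ne hfree hnc hc₀ h.adj_left hpx hpy h.adj_right hqx hqy h.ne)
    (h.not_adj hc)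

end Fintype

end IsUniqueMonochromaticPair

end SimpleGraph

theorem statement_9_general {V : Type} [Fintype V] (G : SimpleGraph V) [DecidableRel G.Adj]
    (hfree : ¬ G.HasOddHole) (hΔ : 7 ≤ G.maxDegree)
    (hcex : (max (G.maxDegree - 1) G.cliqueNum : ℕ) < G.chromaticNumber)
    (u : V) (hu : G.degree u = G.maxDegree) :
    ∃ x y, x ≠ y ∧ G.Adj u x ∧ G.Adj u y ∧ ¬ G.Adj x y ∧
      ∀ c : V → Fin (G.maxDegree - 1),
        (∀ v w, v ≠ u → w ≠ u → G.Adj v w → c v ≠ c w) →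
        c x = c y ∧
          ∀ v w, G.Adj u v → G.Adj u w → v ≠ y → w ≠ y → c v = c w → v = w := by
  classical
  set m := G.maxDegree - 1
  have hdeg : G.degree u = m + 1 := by omega
  have hnc : ¬ G.Colorable m := fun h =>
    hcex.not_ge (h.chromaticNumber_le.trans (by exact_mod_cast le_max_left _ _))
  have hω : (G.cliqueNum : ℕ∞) < G.chromaticNumber :=
    lt_of_le_of_lt (by exact_mod_cast le_max_right _ _) hcex
  by_cases hex : ∃ c₀ : V → Fin m, G.IsProperOn c₀ {u}ᶜ
  · obtain ⟨c₀, hc₀⟩ := hex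
    have hclique : ∀ T : Finset V, G.IsClique (T : Set V) → T.card ≤ m := fun T hT =>
      Nat.lt_succ_iff.1 (hT.card_lt_of_colorable hω hc₀.colorable_succ_of_compl_singleton)
    obtain ⟨x, y, hxy⟩ := exists_isUniqueMonochromaticPair hdeg hnc hc₀
    refine ⟨x, y, hxy.ne, hxy.adj_left, hxy.adj_right, hxy.not_adj hc₀, fun c hc => ?_⟩
    have h := hxy.of_isProperOn hfree hnc hdeg hclique hc₀ hc
    exact ⟨h.color_eq, fun v w hv hw hvy hwy => h.injOn ⟨hv, hvy⟩ ⟨hw, hwy⟩⟩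
  · obtain ⟨x, y, hxy, hx, hy, hnadj⟩ := G.exists_ne_not_adj_of_forall_isClique_card_le u
      fun T hT => by
        have := hT.card_lt_of_colorable hω (G.colorable_of_forall_degree_le G.degree_le_maxDegree)
        omega
    exact ⟨x, y, hxy, hx, hy, hnadj, fun c hc => (hex ⟨c, hc⟩).elim⟩

/-- In a minimum counterexample `G` to "every odd-hole-free graph `H` with
`Δ(H) ≥ 7` satisfies `χ(H) ≤ max (Δ(H) - 1) (ω(H))`", for a vertex `u` of maximum degree,
there are two nonadjacent neighbours `x, y` of `u` such that *every* proper
`(Δ(G) - 1)`-coloring of `G - u` gives `x` and `y` the same color and gives pairwise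
distinct colors to the vertices of `N(u) \ {y}`. -/
theorem statement_9 {V : Type} [Fintype V] (G : SimpleGraph V) [DecidableRel G.Adj]
    (hfree : ¬ G.HasOddHole) (hΔ : 7 ≤ G.maxDegree)
    (hcex : (max (G.maxDegree - 1) G.cliqueNum : ℕ) < G.chromaticNumber)
    (hmin : ∀ (W : Type) [Fintype W] (H : SimpleGraph W) [DecidableRel H.Adj],
      Fintype.card W < Fintype.card V → ¬ H.HasOddHole → 7 ≤ H.maxDegree →
      H.chromaticNumber ≤ (max (H.maxDegree - 1) H.cliqueNum : ℕ))
    (u : V) (hu : G.degree u = G.maxDegree) :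
    ∃ x y, x ≠ y ∧ G.Adj u x ∧ G.Adj u y ∧ ¬ G.Adj x y ∧
      ∀ c : V → Fin (G.maxDegree - 1),
        (∀ v w, v ≠ u → w ≠ u → G.Adj v w → c v ≠ c w) →
        c x = c y ∧
          ∀ v w, G.Adj u v → G.Adj u w → v ≠ y → w ≠ y → c v = c w → v = w :=
  statement_9_general G hfree hΔ hcex u hu
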